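/- Core dissipation inequality for the delayed feedback (heart of the proof of Theorem 2.3). Let τ > 0, 1 ≤ p < ∞, λ₀, λ ∈ L^∞(ℝ), α₀ > 0 with λ₀(x) ≥ α₀ a.e., and let α ≥ 0 and a nonnegative β ∈ L^p(ℝ) satisfy ((e^τ + 1)/2)·|λ(x)| ≤ α + β(x) for a.e. x ∈ ℝ. Let v : ℝ → ℝ be differentiable with v, v' ∈ L²(ℝ), and let w ∈ L²(ℝ). Then −∫_ℝ (v'(x))² dx − ∫_ℝ λ₀(x)·v(x)² dx − ∫_ℝ λ(x)·w(x)·v(x) dx + (1/2)∫_ℝ |λ(x)|·v(x)² dx − (e^{−τ}/2)∫_ℝ |λ(x)|·w(x)² dx ≤ −( α₀ − α − c_p·‖β‖_p^{2p/(2p−1)} )·∫_ℝ v(x)² dx, where c_p := (1 − 1/(2p))·(2/p)^{1/(2p−1)}. -/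

import Mathlib

/-!
Pointwise, AM-GM with weights `e^{∓τ}` gives `-λ w v + |λ| v² / 2 - e^{-τ} |λ| w² / 2 ≤
((e^τ + 1)/2) |λ| v² ≤ (α + β) v²`, and `λ₀ ≥ α₀` takes care of the `λ₀`-term, so everything
reduces to the interpolation inequality `∫ β v² ≤ ‖v'‖₂² + c_p ‖β‖_p^{2p/(2p-1)} ‖v‖₂²`.
For it, integrating `(v²)' = 2 v v'` from `-∞` gives `‖v‖_∞² ≤ 2 ‖v‖₂ ‖v'‖₂`; Hölder's inequality
combined with `v² ≤ ‖v‖_∞²` gives `∫ β v² ≤ ‖β‖_p ‖v‖_∞^{2/p} ‖v‖₂^{2 - 2/p}`; and the weighted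
AM-GM inequality with weights `1/(2p)` and `1 - 1/(2p)` splits the resulting product
`2^{1/p} ‖β‖_p ‖v'‖₂^{1/p} ‖v‖₂^{2 - 1/p}` into `‖v'‖₂² + c_p ‖β‖_p^{2p/(2p-1)} ‖v‖₂²`.
-/

open MeasureTheory

/-- The constant `c_p = (1 - 1/(2p)) (2/p)^{1/(2p-1)}`. -/
noncomputable def cp (p : ℝ) : ℝ := (1 - 1 / (2 * p)) * (2 / p) ^ ((1 : ℝ) / (2 * p - 1))

/-- The `L^r(ℝ)` norm of a function, for `1 ≤ r < ∞`. -/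
noncomputable def Lpnorm (r : ℝ) (f : ℝ → ℝ) : ℝ :=
  (eLpNorm f (ENNReal.ofReal r) volume).toReal

open Real Set Filter Topology

section Holder

variable {α : Type*} [MeasurableSpace α] {μ : Measure α}

theorem rpow_le_rpow_sub_one_mul_self {x S q : ℝ} (hx : 0 ≤ x) (hxS : x ≤ S) (hq : 1 ≤ q) :
    x ^ q ≤ S ^ (q - 1) * x := by
  calc x ^ q = x ^ (q - 1) * x := by
        rw [← rpow_add_one' hx (by linarith), sub_add_cancel]
    _ ≤ S ^ (q - 1) * x := by gcongr

theorem integrable_rpow_of_memLp {f : α → ℝ} {p : ℝ} (hp : 0 < p) (hf0 : ∀ x, 0 ≤ f x)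
    (hf : MemLp f (ENNReal.ofReal p) μ) : Integrable (fun x => f x ^ p) μ := by
  simpa [Real.norm_of_nonneg (hf0 _), hp.le] using
    hf.integrable_norm_rpow (by simp [hp]) ENNReal.ofReal_ne_top

theorem memLp_of_integrable_of_le {g : α → ℝ} {S q : ℝ} (hq : 1 ≤ q) (hg0 : ∀ x, 0 ≤ g x)
    (hgS : ∀ x, g x ≤ S) (hg : Integrable g μ) : MemLp g (ENNReal.ofReal q) μ := by
  rw [← integrable_norm_rpow_iff hg.aestronglyMeasurable (by simp; linarith) ENNReal.ofReal_ne_top,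
    ENNReal.toReal_ofReal (by linarith)]
  refine (hg.const_mul (S ^ (q - 1))).mono'
    (hg.aemeasurable.norm.pow_const _).aestronglyMeasurable (Eventually.of_forall fun x => ?_)
  rw [Real.norm_of_nonneg (by positivity), Real.norm_of_nonneg (hg0 x)]
  exact rpow_le_rpow_sub_one_mul_self (hg0 x) (hgS x) hq

theorem integrable_mul_of_memLp_of_le {f g : α → ℝ} {p S : ℝ} (hp : 1 ≤ p) (hf0 : ∀ x, 0 ≤ f x)
    (hf : MemLp f (ENNReal.ofReal p) μ) (hg0 : ∀ x, 0 ≤ g x) (hgS : ∀ x, g x ≤ S)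
    (hg : Integrable g μ) : Integrable (fun x => f x * g x) μ := by
  refine (hg.add ((integrable_rpow_of_memLp (by linarith) hf0 hf).const_mul S)).mono'
    (hf.aestronglyMeasurable.mul hg.aestronglyMeasurable) (Eventually.of_forall fun x => ?_)
  rw [Real.norm_of_nonneg (mul_nonneg (hf0 x) (hg0 x)), Pi.add_apply]
  have hS : 0 ≤ S := (hg0 x).trans (hgS x)
  -- `f g ≤ g` where `f ≤ 1`, and `f g ≤ f S ≤ f ^ p S` where `1 ≤ f`
  rcases le_total (f x) 1 with hf1 | hf1
  · nlinarith [hg0 x, mul_nonneg hS (rpow_nonneg (hf0 x) p)]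
  · nlinarith [mul_le_mul_of_nonneg_left (hgS x) (hf0 x),
      mul_le_mul_of_nonneg_left (self_le_rpow_of_one_le hf1 hp) hS]

theorem integral_mul_le_Lp_mul_rpow_of_le {f g : α → ℝ} {p S : ℝ} (hp : 1 ≤ p) (hf0 : ∀ x, 0 ≤ f x)
    (hf : MemLp f (ENNReal.ofReal p) μ) (hg0 : ∀ x, 0 ≤ g x) (hgS : ∀ x, g x ≤ S) (hS : 0 ≤ S)
    (hg : Integrable g μ) :
    ∫ x, f x * g x ∂μ
      ≤ (∫ x, f x ^ p ∂μ) ^ (1 / p) * S ^ (1 / p) * (∫ x, g x ∂μ) ^ (1 - 1 / p) := by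
  rcases hp.eq_or_lt with rfl | hp1
  · have hf1 : Integrable f μ := memLp_one_iff_integrable.mp (by simpa using hf)
    simp only [rpow_one, div_one, sub_self, rpow_zero, mul_one, ← integral_mul_const]
    exact integral_mono (integrable_mul_of_memLp_of_le le_rfl hf0 hf hg0 hgS hg)
      (hf1.mul_const S) fun x => mul_le_mul_of_nonneg_left (hgS x) (hf0 x)
  set q := p.conjExponent
  have hpq : p.HolderConjugate q := .conjExponent hp1
  have hq : 1 ≤ q := hpq.symm.lt.le
  have hgq_le : ∫ x, g x ^ q ∂μ ≤ S ^ (q - 1) * ∫ x, g x ∂μ := by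
    rw [← integral_const_mul]
    refine integral_mono_of_nonneg ?_ (hg.const_mul _) ?_ <;> filter_upwards with x
    exacts [rpow_nonneg (hg0 x) q, rpow_le_rpow_sub_one_mul_self (hg0 x) (hgS x) hq]
  have hq' : 1 / q = 1 - 1 / p := by
    have := hpq.inv_add_inv_eq_one
    rw [one_div, one_div]; linarith
  have hq'' : (q - 1) * (1 / q) = 1 / p := by
    rw [sub_mul, mul_one_div_cancel hpq.symm.pos.ne', one_mul, hq']; ring
  calc ∫ x, f x * g x ∂μ ≤ (∫ x, f x ^ p ∂μ) ^ (1 / p) * (∫ x, g x ^ q ∂μ) ^ (1 / q) :=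
        integral_mul_le_Lp_mul_Lq_of_nonneg hpq (Eventually.of_forall hf0)
          (Eventually.of_forall hg0) hf (memLp_of_integrable_of_le hq hg0 hgS hg)
    _ ≤ (∫ x, f x ^ p ∂μ) ^ (1 / p) * (S ^ (q - 1) * ∫ x, g x ∂μ) ^ (1 / q) := by
        have hfp_nonneg : 0 ≤ ∫ x, f x ^ p ∂μ := integral_nonneg fun x => rpow_nonneg (hf0 x) p
        have hgq_nonneg : 0 ≤ ∫ x, g x ^ q ∂μ := integral_nonneg fun x => rpow_nonneg (hg0 x) q
        gcongr
    _ = (∫ x, f x ^ p ∂μ) ^ (1 / p) * S ^ (1 / p) * (∫ x, g x ∂μ) ^ (1 - 1 / p) := by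
        rw [mul_rpow (by positivity) (integral_nonneg hg0), ← rpow_mul hS, hq'', hq',
          mul_assoc]

theorem integral_abs_mul_le_sqrt_mul_sqrt {f g : α → ℝ} (hf : MemLp f 2 μ) (hg : MemLp g 2 μ) :
    ∫ x, |f x * g x| ∂μ ≤ √(∫ x, f x ^ 2 ∂μ) * √(∫ x, g x ^ 2 ∂μ) := by
  have h := integral_mul_le_Lp_mul_Lq_of_nonneg (μ := μ) Real.HolderConjugate.two_two
    (Eventually.of_forall fun x => abs_nonneg (f x))
    (Eventually.of_forall fun x => abs_nonneg (g x))
    (by simpa [Real.norm_eq_abs] using hf.norm) (by simpa [Real.norm_eq_abs] using hg.norm)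
  simpa only [abs_mul, rpow_two, sq_abs, sqrt_eq_rpow] using h

end Holder

theorem mul_rpow_mul_rpow_le_add_cp_mul {p A V B : ℝ} (hp : 1 ≤ p) (hA : 0 ≤ A) (hV : 0 ≤ V)
    (hB : 0 ≤ B) :
    B * (4 * A * V) ^ (1 / (2 * p)) * V ^ (1 - 1 / p)
      ≤ A + cp p * B ^ (2 * p / (2 * p - 1)) * V := by
  have hp0 : 0 < p := by linarith
  have hp1 : 0 < 2 * p - 1 := by linarith
  set w := 1 / (2 * p) with hw
  set s := 2 * p / (2 * p - 1) with hs
  set K := (2 / p) ^ (1 / (2 * p - 1)) with hK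
  have hw0 : 0 ≤ w := by positivity
  have hw1 : w < 1 := by rw [hw, div_lt_one (by positivity)]; linarith
  have hKw : K ^ (1 - w) = (2 / p) ^ w := by
    rw [hK, ← rpow_mul (by positivity)]; congr 1; rw [hw]; field_simp
  have hBs : (B ^ s) ^ (1 - w) = B := by
    rw [← rpow_mul hB]; convert rpow_one B using 2; rw [hs, hw]; field_simp
  have hVw : V ^ w * V ^ (1 - 1 / p) = V ^ (1 - w) := by
    have : w + (1 - 1 / p) = 1 - w := by rw [hw]; field_simp; ring
    rw [← rpow_add' hV (by linarith), this]
  have h4 : (2 * p) ^ w * (2 / p) ^ w = 4 ^ w := by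
    rw [← mul_rpow (by positivity) (by positivity)]; congr 1; field_simp; norm_num
  -- `K` is chosen so that the geometric mean of `2p A` and `K B^s V` is the left-hand side
  have key := geom_mean_le_arith_mean2_weighted hw0 (by linarith) (by positivity : 0 ≤ 2 * p * A)
    (by positivity : 0 ≤ K * B ^ s * V) (add_sub_cancel w 1)
  calc B * (4 * A * V) ^ w * V ^ (1 - 1 / p)
      = (2 * p * A) ^ w * (K * B ^ s * V) ^ (1 - w) := by
        rw [mul_rpow (by positivity) hV, mul_rpow (by norm_num) hA, mul_rpow (by positivity) hA,
          mul_rpow (by positivity) hV, mul_rpow (by positivity : 0 ≤ K) (by positivity), hKw, hBs,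
          ← hVw, ← h4]
        ring
    _ ≤ w * (2 * p * A) + (1 - w) * (K * B ^ s * V) := key
    _ = A + cp p * B ^ s * V := by
        simp only [cp, hw, hK]; field_simp

theorem sq_le_two_mul_integral_abs_mul_deriv {v : ℝ → ℝ} (hv : Differentiable ℝ v)
    (hv2 : MemLp v 2 volume) (hv'2 : MemLp (deriv v) 2 volume) (x : ℝ) :
    v x ^ 2 ≤ 2 * ∫ y, |v y * deriv v y| := by
  have hderiv : ∀ y, HasDerivAt (fun y => v y ^ 2) (2 * (v y * deriv v y)) y := fun y =>
    ((hv y).hasDerivAt.pow 2).congr_deriv (by simp; ring)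
  have hint : Integrable (fun y => 2 * (v y * deriv v y)) :=
    (hv2.integrable_mul hv'2).const_mul 2
  have hlim : Tendsto (fun y => v y ^ 2) atBot (𝓝 0) :=
    tendsto_zero_of_hasDerivAt_of_integrableOn_Iic (a := x) (fun y _ => hderiv y)
      hint.integrableOn hv2.integrable_sq.integrableOn
  have hftc := integral_Iic_of_hasDerivAt_of_tendsto' (a := x) (fun y _ => hderiv y)
    hint.integrableOn hlim
  calc v x ^ 2 = ∫ y in Iic x, 2 * (v y * deriv v y) := by rw [hftc, sub_zero]
    _ ≤ ∫ y in Iic x, |2 * (v y * deriv v y)| :=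
      integral_mono hint.integrableOn hint.abs.integrableOn fun y => le_abs_self _
    _ ≤ ∫ y, |2 * (v y * deriv v y)| :=
      setIntegral_le_integral hint.abs (Eventually.of_forall fun y => abs_nonneg _)
    _ = 2 * ∫ y, |v y * deriv v y| := by simp only [abs_mul, abs_two, integral_const_mul]

theorem sq_le_two_mul_sqrt_integral_sq_mul_sqrt_integral_deriv_sq {v : ℝ → ℝ}
    (hv : Differentiable ℝ v) (hv2 : MemLp v 2 volume) (hv'2 : MemLp (deriv v) 2 volume) (x : ℝ) :
    v x ^ 2 ≤ 2 * √(∫ y, v y ^ 2) * √(∫ y, deriv v y ^ 2) := by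
  have := integral_abs_mul_le_sqrt_mul_sqrt hv2 hv'2
  linarith [sq_le_two_mul_integral_abs_mul_deriv hv hv2 hv'2 x]

theorem Lpnorm_eq_integral_rpow {p : ℝ} (hp : 0 < p) {f : ℝ → ℝ} (hf0 : ∀ x, 0 ≤ f x)
    (hf : MemLp f (ENNReal.ofReal p) volume) : Lpnorm p f = (∫ x, f x ^ p) ^ (1 / p) := by
  rw [Lpnorm, hf.eLpNorm_eq_integral_rpow_norm (by simp [hp]) ENNReal.ofReal_ne_top,
    ENNReal.toReal_ofReal hp.le, ENNReal.toReal_ofReal (by positivity), one_div]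
  simp only [Real.norm_of_nonneg (hf0 _)]

theorem integral_mul_sq_le_integral_deriv_sq_add_cp_mul {p : ℝ} (hp : 1 ≤ p) {β v : ℝ → ℝ}
    (hβ0 : ∀ x, 0 ≤ β x) (hβ : MemLp β (ENNReal.ofReal p) volume) (hv : Differentiable ℝ v)
    (hv2 : MemLp v 2 volume) (hv'2 : MemLp (deriv v) 2 volume) :
    ∫ x, β x * v x ^ 2
      ≤ (∫ x, deriv v x ^ 2) + cp p * Lpnorm p β ^ (2 * p / (2 * p - 1)) * ∫ x, v x ^ 2 := by
  have hp0 : 0 < p := by linarith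
  set A := ∫ x, deriv v x ^ 2
  set V := ∫ x, v x ^ 2
  have hA : 0 ≤ A := integral_nonneg fun x => sq_nonneg _
  have hV : 0 ≤ V := integral_nonneg fun x => sq_nonneg _
  have hsup : (2 * √V * √A) ^ (1 / p) = (4 * A * V) ^ (1 / (2 * p)) := by
    rw [show 1 / p = 2 * (1 / (2 * p)) by field_simp, rpow_mul (by positivity), rpow_two,
      mul_pow, mul_pow, sq_sqrt hV, sq_sqrt hA]
    ring_nf
  calc ∫ x, β x * v x ^ 2 ≤ (∫ x, β x ^ p) ^ (1 / p) * (2 * √V * √A) ^ (1 / p) * V ^ (1 - 1 / p) :=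
        integral_mul_le_Lp_mul_rpow_of_le hp hβ0 hβ (fun x => sq_nonneg (v x))
          (sq_le_two_mul_sqrt_integral_sq_mul_sqrt_integral_deriv_sq hv hv2 hv'2) (by positivity)
          hv2.integrable_sq
    _ = Lpnorm p β * (4 * A * V) ^ (1 / (2 * p)) * V ^ (1 - 1 / p) := by
        rw [Lpnorm_eq_integral_rpow hp0 hβ0 hβ, hsup]
    _ ≤ A + cp p * Lpnorm p β ^ (2 * p / (2 * p - 1)) * V :=
        mul_rpow_mul_rpow_le_add_cp_mul hp hA hV ENNReal.toReal_nonneg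

theorem neg_mul_mul_add_half_sub_le {t : ℝ} (ht : 0 < t) (a w v : ℝ) :
    -(a * w * v) + 1 / 2 * (|a| * v ^ 2) - t⁻¹ / 2 * (|a| * w ^ 2) ≤ (t + 1) / 2 * |a| * v ^ 2 := by
  have hamgm : 2 * (|w| * |v|) ≤ t⁻¹ * w ^ 2 + t * v ^ 2 := by
    have hsq : t⁻¹ * (|w| - t * |v|) ^ 2 = t⁻¹ * w ^ 2 - 2 * (|w| * |v|) + t * v ^ 2 := by
      rw [← sq_abs w, ← sq_abs v]; field_simp; ring
    nlinarith [mul_nonneg (inv_pos.mpr ht).le (sq_nonneg (|w| - t * |v|))]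
  have habs : -(a * w * v) ≤ |a| * (|w| * |v|) := by
    rw [← abs_mul, ← abs_mul, ← mul_assoc]; exact neg_le_abs _
  nlinarith [mul_le_mul_of_nonneg_left hamgm (abs_nonneg a)]

theorem integral_feedback_terms_le {τ α : ℝ} {l β v w : ℝ → ℝ} (hl : MemLp l ⊤ volume)
    (hv : MemLp v 2 volume) (hw : MemLp w 2 volume)
    (hβv : Integrable (fun x => β x * v x ^ 2) volume)
    (hlbound : ∀ᵐ x ∂volume, (exp τ + 1) / 2 * |l x| ≤ α + β x) :
    -(∫ x, l x * w x * v x) + 1 / 2 * (∫ x, |l x| * v x ^ 2)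
        - exp (-τ) / 2 * (∫ x, |l x| * w x ^ 2)
      ≤ α * (∫ x, v x ^ 2) + ∫ x, β x * v x ^ 2 := by
  have hlwv : Integrable (fun x => -(l x * w x * v x)) volume :=
    ((hw.integrable_mul hv).mul_of_top_right hl).neg.congr
      (ae_of_all _ fun x => by simp [mul_assoc])
  have hlv : Integrable (fun x => 1 / 2 * (|l x| * v x ^ 2)) volume :=
    (hv.integrable_sq.mul_of_top_right hl.norm).const_mul _
  have hlw : Integrable (fun x => exp (-τ) / 2 * (|l x| * w x ^ 2)) volume :=
    (hw.integrable_sq.mul_of_top_right hl.norm).const_mul _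
  have hαv : Integrable (fun x => α * v x ^ 2) volume := hv.integrable_sq.const_mul α
  calc _ = ∫ x, (-(l x * w x * v x) + 1 / 2 * (|l x| * v x ^ 2)
          - exp (-τ) / 2 * (|l x| * w x ^ 2)) := by
        rw [integral_sub (hlwv.fun_add hlv) hlw, integral_add hlwv hlv, integral_neg,
          integral_const_mul, integral_const_mul]
    _ ≤ ∫ x, (α * v x ^ 2 + β x * v x ^ 2) := by
        refine integral_mono_ae ((hlwv.fun_add hlv).sub hlw) (hαv.add hβv) ?_
        filter_upwards [hlbound] with x hx
        have := neg_mul_mul_add_half_sub_le (exp_pos τ) (l x) (w x) (v x)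
        rw [← exp_neg] at this
        nlinarith [mul_le_mul_of_nonneg_right hx (sq_nonneg (v x))]
    _ = _ := by rw [integral_add hαv hβv, integral_const_mul]

theorem core_dissipation_inequality_general
    (τ : ℝ)
    (p : ℝ) (hp : 1 ≤ p)
    (l0 l : ℝ → ℝ)
    (hl0 : MemLp l0 ⊤ (volume : Measure ℝ)) (hl : MemLp l ⊤ (volume : Measure ℝ))
    (α₀ : ℝ)
    (hlower : ∀ᵐ x : ℝ ∂(volume : Measure ℝ), α₀ ≤ l0 x)
    (α : ℝ)
    (β : ℝ → ℝ) (hβmem : MemLp β (ENNReal.ofReal p) (volume : Measure ℝ))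
    (hβ0 : ∀ x, 0 ≤ β x)
    (hlbound : ∀ᵐ x : ℝ ∂(volume : Measure ℝ),
      (Real.exp τ + 1) / 2 * |l x| ≤ α + β x)
    (v : ℝ → ℝ) (hv : Differentiable ℝ v)
    (hv2 : MemLp v 2 (volume : Measure ℝ))
    (hv'2 : MemLp (deriv v) 2 (volume : Measure ℝ))
    (w : ℝ → ℝ) (hw : MemLp w 2 (volume : Measure ℝ)) :
    -(∫ x : ℝ, (deriv v x) ^ 2) - (∫ x : ℝ, l0 x * (v x) ^ 2)
        - (∫ x : ℝ, l x * w x * v x)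
        + (1 / 2) * (∫ x : ℝ, |l x| * (v x) ^ 2)
        - (Real.exp (-τ) / 2) * (∫ x : ℝ, |l x| * (w x) ^ 2)
      ≤ -(α₀ - α - cp p * (Lpnorm p β) ^ (2 * p / (2 * p - 1))) * ∫ x : ℝ, (v x) ^ 2 := by
  have hsup := sq_le_two_mul_sqrt_integral_sq_mul_sqrt_integral_deriv_sq hv hv2 hv'2
  have hβv : Integrable (fun x => β x * v x ^ 2) volume :=
    integrable_mul_of_memLp_of_le hp hβ0 hβmem (fun x => sq_nonneg (v x)) hsup hv2.integrable_sq
  have hl0v : α₀ * ∫ x, v x ^ 2 ≤ ∫ x, l0 x * v x ^ 2 := by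
    rw [← integral_const_mul]
    refine integral_mono_ae (hv2.integrable_sq.const_mul α₀)
      (hv2.integrable_sq.mul_of_top_right hl0) ?_
    filter_upwards [hlower] with x hx using mul_le_mul_of_nonneg_right hx (sq_nonneg _)
  have hfeedback := integral_feedback_terms_le hl hv2 hw hβv hlbound
  have hinterp := integral_mul_sq_le_integral_deriv_sq_add_cp_mul hp hβ0 hβmem hv hv2 hv'2
  linarith

/-- Core dissipation inequality for the delayed feedback (heart of the proof of
Theorem 2.3). -/
theorem core_dissipation_inequality
    (τ : ℝ) (hτ : 0 < τ)
    (p : ℝ) (hp : 1 ≤ p)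
    (l0 l : ℝ → ℝ)
    (hl0 : MemLp l0 ⊤ (volume : Measure ℝ)) (hl : MemLp l ⊤ (volume : Measure ℝ))
    (α₀ : ℝ) (hα₀ : 0 < α₀)
    (hlower : ∀ᵐ x : ℝ ∂(volume : Measure ℝ), α₀ ≤ l0 x)
    (α : ℝ) (hα : 0 ≤ α)
    (β : ℝ → ℝ) (hβmem : MemLp β (ENNReal.ofReal p) (volume : Measure ℝ))
    (hβ0 : ∀ x, 0 ≤ β x)
    (hlbound : ∀ᵐ x : ℝ ∂(volume : Measure ℝ),
      (Real.exp τ + 1) / 2 * |l x| ≤ α + β x)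
    (v : ℝ → ℝ) (hv : Differentiable ℝ v)
    (hv2 : MemLp v 2 (volume : Measure ℝ))
    (hv'2 : MemLp (deriv v) 2 (volume : Measure ℝ))
    (w : ℝ → ℝ) (hw : MemLp w 2 (volume : Measure ℝ)) :
    -(∫ x : ℝ, (deriv v x) ^ 2) - (∫ x : ℝ, l0 x * (v x) ^ 2)
        - (∫ x : ℝ, l x * w x * v x)
        + (1 / 2) * (∫ x : ℝ, |l x| * (v x) ^ 2)
        - (Real.exp (-τ) / 2) * (∫ x : ℝ, |l x| * (w x) ^ 2)
      ≤ -(α₀ - α - cp p * (Lpnorm p β) ^ (2 * p / (2 * p - 1))) * ∫ x : ℝ, (v x) ^ 2 :=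
  core_dissipation_inequality_general τ p hp l0 l hl0 hl α₀ hlower α β hβmem hβ0 hlbound v hv hv2
    hv'2 w hw
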